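/- For every n ≥ 0, the number of 2-distant noncrossing partitions of [n] equals the number of 12312-avoiding partitions of [n] (equivalently, 3-front noncrossing partitions). -/

import Mathlib

/-!
A partition of `[n + 1]` is a partition of `[n]` with `n + 1` added either as a singleton block or
to an existing block. A singleton creates no forbidden pattern, while joining a block creates one
new edge ending at `n + 1`: the standard edge from the block's maximum for 2-distant crossings,
the front edge from its minimum for 3-front crossings. So the blocks that may be joined are
marked by the "active" closers, respectively openers, and in both classes the number `k` of
active elements evolves by the same succession rule `(k) ⇝ (k+1) (2) (3) ⋯ (k) (k)` (the
children being ordered by their active element). Two generating trees with the same rule and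
the same root are isomorphic level by level.
-/

/-- `(i,j)` is a standard edge of the set partition `p` of `[n]`:
`i < j` lie in the same block with no block element strictly between them. -/
def stdEdge {n : ℕ} (p : Finpartition (Finset.Icc 1 n : Finset ℕ)) (i j : ℕ) : Prop :=
  i < j ∧ ∃ B ∈ p.parts, i ∈ B ∧ j ∈ B ∧ ∀ t ∈ B, ¬ (i < t ∧ t < j)

/-- `(i,j)` is a front edge: `i < j` lie in the same block and `i` is the
minimum (head) of that block. -/
def frontEdge {n : ℕ} (p : Finpartition (Finset.Icc 1 n : Finset ℕ)) (i j : ℕ) : Prop :=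
  i < j ∧ ∃ B ∈ p.parts, i ∈ B ∧ j ∈ B ∧ ∀ t ∈ B, i ≤ t

/-- `h` is a head of `p`, i.e. the minimum element of its block. -/
def isHead {n : ℕ} (p : Finpartition (Finset.Icc 1 n : Finset ℕ)) (h : ℕ) : Prop :=
  ∃ B ∈ p.parts, h ∈ B ∧ ∀ t ∈ B, h ≤ t

/-- `p` has no `k`-distant crossing: no standard edges `(i1,j1)`, `(i2,j2)` with
`i1 < i2 < j1 < j2` and `j1 - i2 ≥ k`. -/
def kDistantNoncrossing {n : ℕ} (k : ℕ) (p : Finpartition (Finset.Icc 1 n : Finset ℕ)) : Prop :=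
  ¬ ∃ i1 j1 i2 j2, stdEdge p i1 j1 ∧ stdEdge p i2 j2 ∧
    i1 < i2 ∧ i2 < j1 ∧ j1 < j2 ∧ k ≤ j1 - i2

/-- `p` has no `k`-front crossing: no front edges `(i1,j1)`, `(i2,j2)` with
`i1 < i2 < j1 < j2` and at least `k - 2` heads strictly between `i2` and `j1`.
This is equivalent to `p` being `12⋯k12`-avoiding. -/
def kFrontNoncrossing {n : ℕ} (k : ℕ) (p : Finpartition (Finset.Icc 1 n : Finset ℕ)) : Prop :=
  ¬ ∃ i1 j1 i2 j2, frontEdge p i1 j1 ∧ frontEdge p i2 j2 ∧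
    i1 < i2 ∧ i2 < j1 ∧ j1 < j2 ∧
    k - 2 ≤ Nat.card {h : ℕ // isHead p h ∧ i2 < h ∧ h < j1}

/-- number of cycles (including fixed points) of a permutation of `Fin n`. -/
def cycleCount {n : ℕ} (σ : Equiv.Perm (Fin n)) : ℕ :=
  σ.cycleType.card + (n - σ.cycleType.sum)

/-- the signed Stirling number of the first kind: `(-1)^(n-k)` times the number of
permutations of `[n]` with `k` cycles. -/
noncomputable def stirlingFirst (n k : ℕ) : ℤ :=
  (-1) ^ (n - k) * (Nat.card {σ : Equiv.Perm (Fin n) // cycleCount σ = k} : ℤ)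

/-- the Stirling number of the second kind: the number of set partitions of `[n]`
into `k` blocks. -/
noncomputable def stirlingSecond (n k : ℕ) : ℕ :=
  Nat.card {p : Finpartition (Finset.Icc 1 n : Finset ℕ) // p.parts.card = k}

/-- the Bell number: the number of set partitions of `[n]`. -/
noncomputable def bell (n : ℕ) : ℕ := Nat.card (Finpartition (Finset.Icc 1 n : Finset ℕ))

/-- the number of `k`-distant noncrossing partitions of `[n]`. -/
noncomputable def dcount (k n : ℕ) : ℕ :=
  Nat.card {p : Finpartition (Finset.Icc 1 n : Finset ℕ) // kDistantNoncrossing k p}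

/-- the number of `12⋯k12`-avoiding (= `k`-front noncrossing) partitions of `[n]`. -/
noncomputable def fcount (k n : ℕ) : ℕ :=
  Nat.card {p : Finpartition (Finset.Icc 1 n : Finset ℕ) // kFrontNoncrossing k p}

open Finset

/-- The succession rule `(k) ⇝ (k+1) (2) (3) ⋯ (k) (k)`. -/
def childLabel (k : ℕ) : Option (Fin k) → ℕ
  | none => k + 1
  | some i => i + if (i : ℕ) + 1 = k then 1 else 2

lemma childLabel_map_cast {k l : ℕ} (h : k = l) (o : Option (Fin k)) :
    childLabel l (o.map (Fin.cast h)) = childLabel k o := by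
  subst h
  cases o <;> rfl

theorem exists_equiv_label_eq {α β : ℕ → Type*} (la : ∀ n, α n → ℕ) (lb : ∀ n, β n → ℕ)
    (e₀ : α 0 ≃ β 0) (he₀ : ∀ a, lb 0 (e₀ a) = la 0 a)
    (ea : ∀ n, (Σ a : α n, Option (Fin (la n a))) ≃ α (n + 1))
    (hea : ∀ n x, la (n + 1) (ea n x) = childLabel (la n x.1) x.2)
    (eb : ∀ n, (Σ b : β n, Option (Fin (lb n b))) ≃ β (n + 1))
    (heb : ∀ n y, lb (n + 1) (eb n y) = childLabel (lb n y.1) y.2) :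
    ∀ n, ∃ e : α n ≃ β n, ∀ a, lb n (e a) = la n a
  | 0 => ⟨e₀, he₀⟩
  | n + 1 => by
    obtain ⟨e, he⟩ := exists_equiv_label_eq la lb e₀ he₀ ea hea eb heb n
    let f : (Σ a : α n, Option (Fin (la n a))) ≃ Σ b : β n, Option (Fin (lb n b)) :=
      Equiv.sigmaCongr e fun a => Equiv.optionCongr (finCongr (he a).symm)
    refine ⟨(ea n).symm.trans (f.trans (eb n)), fun a => ?_⟩
    obtain ⟨x, rfl⟩ := (ea n).surjective a
    simp only [Equiv.trans_apply, Equiv.symm_apply_apply, heb, hea]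
    exact childLabel_map_cast (he x.1).symm x.2

namespace Finset

section PartialOrder
variable {α : Type*} [PartialOrder α] {B : Finset α} {m i : α}

lemma mem_and_forall_le_iff_eq (hm : m ∈ B) (hmax : ∀ t ∈ B, t ≤ m) :
    (i ∈ B ∧ ∀ t ∈ B, t ≤ i) ↔ i = m :=
  ⟨fun ⟨hi, hle⟩ => le_antisymm (hmax i hi) (hle m hm), fun h => h ▸ ⟨hm, hmax⟩⟩

lemma mem_and_forall_ge_iff_eq (hm : m ∈ B) (hmin : ∀ t ∈ B, m ≤ t) :
    (i ∈ B ∧ ∀ t ∈ B, i ≤ t) ↔ i = m :=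
  ⟨fun ⟨hi, hle⟩ => le_antisymm (hle m hm) (hmin i hi), fun h => h ▸ ⟨hm, hmin⟩⟩

end PartialOrder

section LinearOrder
variable {α : Type*} [LinearOrder α]

lemma card_filter_lt_orderEmbOfFin (s : Finset α) {k : ℕ} (h : #s = k) (i : Fin k) :
    #{x ∈ s | x < s.orderEmbOfFin h i} = i := by
  have : {x ∈ s | x < s.orderEmbOfFin h i} = (Iio i).map (s.orderEmbOfFin h).toEmbedding := by
    ext x
    simp only [mem_filter, mem_map, mem_Iio, RelEmbedding.coe_toEmbedding]
    constructor
    · rintro ⟨hx, hlt⟩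
      obtain ⟨j, rfl⟩ : x ∈ Set.range (s.orderEmbOfFin h) := by
        rwa [range_orderEmbOfFin]
      exact ⟨j, by simpa using hlt, rfl⟩
    · rintro ⟨j, hj, rfl⟩
      exact ⟨orderEmbOfFin_mem s h j, by simpa using hj⟩
  rw [this, card_map, Fin.card_Iio]

lemma forall_le_iff_card_filter_lt_add_one {s : Finset α} {m : α} (hm : m ∈ s) :
    (∀ x ∈ s, x ≤ m) ↔ #{x ∈ s | x < m} + 1 = #s := by
  have hsub : {x ∈ s | x < m} ⊆ s.erase m := fun x hx => by
    rw [mem_filter] at hx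
    exact mem_erase.2 ⟨hx.2.ne, hx.1⟩
  rw [← card_erase_add_one hm, add_left_inj]
  constructor
  · intro hle
    refine congrArg card (hsub.antisymm fun x hx => mem_filter.2 ⟨mem_of_mem_erase hx, ?_⟩)
    exact (hle x (mem_of_mem_erase hx)).lt_of_ne (ne_of_mem_erase hx)
  · intro hcard x hx
    by_contra! hlt
    have hx' : x ∈ {x ∈ s | x < m} := by
      rw [eq_of_subset_of_card_le hsub hcard.ge]
      exact mem_erase.2 ⟨hlt.ne', hx⟩
    exact (mem_filter.1 hx').2.not_gt hlt

lemma card_filter_lt_or_eq_max {s : Finset α} {m T : α} (hm : m ∈ s) (hT : T ∈ s)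
    (hle : ∀ x ∈ s, x ≤ T) :
    #{x ∈ s | x < m ∨ m < x ∧ x = T} = #{x ∈ s | x < m} + if ∀ x ∈ s, x ≤ m then 0 else 1 := by
  by_cases hmax : ∀ x ∈ s, x ≤ m
  · obtain rfl : T = m := le_antisymm (hmax T hT) (hle m hm)
    rw [if_pos hmax, add_zero]
    congr 1
    exact filter_congr fun x _ => by grind
  · push Not at hmax
    obtain ⟨y, hy, hmy⟩ := hmax
    have hmT : m < T := hmy.trans_le (hle y hy)
    have : {x ∈ s | x < m ∨ m < x ∧ x = T} = insert T {x ∈ s | x < m} := by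
      ext x
      simp only [mem_filter, mem_insert]
      grind
    rw [this, card_insert_of_notMem (by simp [hmT.le.not_gt]), if_neg (by grind)]

end LinearOrder

end Finset

namespace Finpartition
variable {α : Type*} [DecidableEq α] {s t : Finset α} {a : α}

lemma parts_avoid_of_mem (P : Finpartition s) {B : Finset α} (hB : B ∈ P.parts) :
    (P.avoid B).parts = P.parts.erase B := by
  ext C
  rw [mem_avoid, mem_erase]
  constructor
  · rintro ⟨D, hD, hDB, rfl⟩
    have hne : D ≠ B := by rintro rfl; exact hDB le_rfl
    have hdisj : Disjoint D B := P.disjoint hD hB hne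
    rw [hdisj.sdiff_eq_left]
    exact ⟨hne, hD⟩
  · rintro ⟨hne, hC⟩
    have hdisj : Disjoint C B := P.disjoint hC hB hne
    refine ⟨C, hC, fun hle => P.ne_bot hC ?_, hdisj.sdiff_eq_left⟩
    exact hdisj.eq_bot_of_le hle

def insertSingleton (P : Finpartition s) (ha : a ∉ s) (ht : insert a s = t) : Finpartition t :=
  P.extend (singleton_ne_empty a) (disjoint_singleton_right.2 ha)
    (by rw [← ht, sup_eq_union, union_comm, ← insert_eq])

@[simp]
lemma parts_insertSingleton (P : Finpartition s) (ha : a ∉ s) (ht : insert a s = t) :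
    (P.insertSingleton ha ht).parts = insert {a} P.parts := rfl

def insertIntoPart (P : Finpartition s) {B : Finset α} (hB : B ∈ P.parts) (ha : a ∉ s)
    (ht : insert a s = t) : Finpartition t :=
  (P.avoid B).extend (insert_ne_empty a B)
    (disjoint_insert_right.2 ⟨fun h => ha (mem_sdiff.1 h).1, disjoint_sdiff_self_left⟩)
    (by rw [← ht, sup_eq_union, union_insert, sdiff_union_of_subset (P.le hB)])

@[simp]
lemma parts_insertIntoPart (P : Finpartition s) {B : Finset α} (hB : B ∈ P.parts) (ha : a ∉ s)
    (ht : insert a s = t) :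
    (P.insertIntoPart hB ha ht).parts = insert (insert a B) (P.parts.erase B) := by
  rw [insertIntoPart, extend_parts, parts_avoid_of_mem P hB]

variable (ha : a ∉ s) (ht : insert a s = t)
include ha

lemma notMem_of_mem_parts {P : Finpartition s} {B : Finset α} (hB : B ∈ P.parts) : a ∉ B :=
  fun h => ha (P.le hB h)

lemma singleton_notMem_parts (P : Finpartition s) : {a} ∉ P.parts :=
  fun h => notMem_of_mem_parts ha h (mem_singleton_self a)

lemma insert_notMem_parts (P : Finpartition s) (B : Finset α) : insert a B ∉ P.parts :=
  fun h => notMem_of_mem_parts ha h (mem_insert_self a B)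

lemma insertSingleton_injective :
    Function.Injective fun P : Finpartition s => P.insertSingleton ha ht := by
  intro P P' h
  have hparts := congrArg (fun Q : Finpartition t => Q.parts.erase {a}) h
  simp only [parts_insertSingleton] at hparts
  ext1
  rwa [erase_insert (singleton_notMem_parts ha P), erase_insert (singleton_notMem_parts ha P')]
    at hparts

lemma insertSingleton_ne_insertIntoPart (P P' : Finpartition s) {B : Finset α} (hB : B ∈ P'.parts) :
    P.insertSingleton ha ht ≠ P'.insertIntoPart hB ha ht := by
  intro h
  have hmem : {a} ∈ (P'.insertIntoPart hB ha ht).parts := by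
    rw [← h, parts_insertSingleton]; exact mem_insert_self _ _
  rw [parts_insertIntoPart, mem_insert, mem_erase] at hmem
  rcases hmem with heq | ⟨-, hmem⟩
  · obtain ⟨b, hb⟩ := P'.nonempty_of_mem_parts hB
    have : b = a := mem_singleton.1 (heq ▸ mem_insert_of_mem hb)
    exact notMem_of_mem_parts ha hB (this ▸ hb)
  · exact singleton_notMem_parts ha P' hmem

lemma insertIntoPart_inj {P P' : Finpartition s} {B B' : Finset α} (hB : B ∈ P.parts)
    (hB' : B' ∈ P'.parts) (h : P.insertIntoPart hB ha ht = P'.insertIntoPart hB' ha ht) :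
    P = P' ∧ B = B' := by
  have hparts := congrArg parts h
  simp only [parts_insertIntoPart] at hparts
  have hBB : insert a B = insert a B' := by
    have hmem : insert a B ∈ insert (insert a B') (P'.parts.erase B') :=
      hparts ▸ mem_insert_self _ _
    rw [mem_insert] at hmem
    exact hmem.resolve_right fun h => insert_notMem_parts ha P' B (mem_of_mem_erase h)
  obtain rfl : B = B' := by
    simpa [erase_insert (notMem_of_mem_parts ha hB), erase_insert (notMem_of_mem_parts ha hB')]
      using congrArg (erase · a) hBB
  refine ⟨?_, rfl⟩
  ext1
  have hnot : ∀ Q : Finpartition s, insert a B ∉ Q.parts.erase B :=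
    fun Q h => insert_notMem_parts ha Q B (mem_of_mem_erase h)
  have := congrArg (erase · (insert a B)) hparts
  simp only [erase_insert (hnot P), erase_insert (hnot P')] at this
  rw [← insert_erase hB, ← insert_erase hB', this]

lemma exists_eq_insertSingleton_or_insertIntoPart (Q : Finpartition t) :
    (∃ P : Finpartition s, Q = P.insertSingleton ha ht) ∨
      ∃ (P : Finpartition s) (B : Finset α) (hB : B ∈ P.parts), Q = P.insertIntoPart hB ha ht := by
  have hat : a ∈ t := ht ▸ mem_insert_self a s
  set C := Q.part a
  have hC : C ∈ Q.parts := Q.part_mem.2 hat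
  have haC : a ∈ C := Q.mem_part_self.2 hat
  have hCt : ∀ x ∈ C, x = a ∨ x ∈ s := fun x hx => by
    simpa [← ht] using Q.le hC hx
  by_cases hCa : C = {a}
  · left
    have hs : t \ C = s := by
      ext x; simp only [mem_sdiff, ← ht, hCa, mem_insert, mem_singleton]; grind
    refine ⟨(Q.avoid C).copy hs, ?_⟩
    ext1
    rw [parts_insertSingleton, copy_parts, parts_avoid_of_mem Q hC, ← hCa, insert_erase hC]
  · right
    have hB : C.erase a ≠ ∅ := fun h => hCa (by
      rw [← insert_erase haC, h]; rfl)
    have hs : t \ C ⊔ C.erase a = s := by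
      ext x; simp only [sup_eq_union, mem_union, mem_sdiff, mem_erase, ← ht, mem_insert]; grind
    let P := (Q.avoid C).extend hB (disjoint_sdiff_self_left.mono_right (erase_subset a C)) hs
    have hBP : C.erase a ∈ P.parts := by
      simp only [P, extend_parts, mem_insert_self]
    refine ⟨P, C.erase a, hBP, ?_⟩
    ext1
    have hBQ : C.erase a ∉ Q.parts.erase C := fun h => by
      obtain ⟨b, hb⟩ := nonempty_iff_ne_empty.2 hB
      exact ne_of_mem_erase h (Q.eq_of_mem_parts (mem_of_mem_erase h) hC hb (mem_of_mem_erase hb))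
    rw [parts_insertIntoPart, insert_erase haC, extend_parts, parts_avoid_of_mem Q hC,
      erase_insert hBQ, insert_erase hC]

end Finpartition

abbrev SetPartition (n : ℕ) := Finpartition (Finset.Icc 1 n : Finset ℕ)

namespace SetPartition
variable {n : ℕ} {p : SetPartition n} {B : Finset ℕ}

lemma succ_notMem_Icc : n + 1 ∉ Icc 1 n := by simp

def addSingleton (p : SetPartition n) : SetPartition (n + 1) :=
  p.insertSingleton succ_notMem_Icc (insert_Icc_right_eq_Icc_add_one (by omega))

def addToPart (p : SetPartition n) (hB : B ∈ p.parts) : SetPartition (n + 1) :=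
  p.insertIntoPart hB succ_notMem_Icc (insert_Icc_right_eq_Icc_add_one (by omega))

lemma le_of_mem_parts (hB : B ∈ p.parts) {x : ℕ} (hx : x ∈ B) : x ≤ n :=
  (mem_Icc.1 (p.le hB hx)).2

lemma stdEdge_addSingleton {i j : ℕ} : stdEdge p.addSingleton i j ↔ stdEdge p i j := by
  simp only [stdEdge, addSingleton, Finpartition.parts_insertSingleton, exists_mem_insert,
    mem_singleton]
  grind

lemma frontEdge_addSingleton {i j : ℕ} : frontEdge p.addSingleton i j ↔ frontEdge p i j := by
  simp only [frontEdge, addSingleton, Finpartition.parts_insertSingleton, exists_mem_insert,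
    mem_singleton]
  grind

lemma isHead_addSingleton {h : ℕ} : isHead p.addSingleton h ↔ isHead p h ∨ h = n + 1 := by
  simp only [isHead, addSingleton, Finpartition.parts_insertSingleton, exists_mem_insert,
    mem_singleton]
  grind

lemma stdEdge_addToPart (hB : B ∈ p.parts) {i j : ℕ} : stdEdge (p.addToPart hB) i j ↔
    stdEdge p i j ∨ (j = n + 1 ∧ i ∈ B ∧ ∀ t ∈ B, t ≤ i) := by
  have hBn : ∀ x ∈ B, x ≤ n := fun _ => le_of_mem_parts hB
  simp only [stdEdge, addToPart, Finpartition.parts_insertIntoPart]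
  conv_rhs => rw [← insert_erase hB]
  simp only [exists_mem_insert, forall_mem_insert]
  grind

lemma frontEdge_addToPart (hB : B ∈ p.parts) {i j : ℕ} : frontEdge (p.addToPart hB) i j ↔
    frontEdge p i j ∨ (j = n + 1 ∧ i ∈ B ∧ ∀ t ∈ B, i ≤ t) := by
  have hBn : ∀ x ∈ B, x ≤ n := fun _ => le_of_mem_parts hB
  simp only [frontEdge, addToPart, Finpartition.parts_insertIntoPart]
  conv_rhs => rw [← insert_erase hB]
  simp only [exists_mem_insert, forall_mem_insert]
  grind

lemma isHead_addToPart (hB : B ∈ p.parts) {h : ℕ} : isHead (p.addToPart hB) h ↔ isHead p h := by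
  have hBn : ∀ x ∈ B, x ≤ n := fun _ => le_of_mem_parts hB
  obtain ⟨b, hb⟩ := p.nonempty_of_mem_parts hB
  simp only [isHead, addToPart, Finpartition.parts_insertIntoPart]
  conv_rhs => rw [← insert_erase hB]
  simp only [exists_mem_insert, forall_mem_insert]
  grind

lemma le_of_stdEdge {i j : ℕ} (h : stdEdge p i j) : j ≤ n := by
  obtain ⟨-, B, hB, -, hj, -⟩ := h
  exact le_of_mem_parts hB hj

lemma le_of_frontEdge {i j : ℕ} (h : frontEdge p i j) : j ≤ n := by
  obtain ⟨-, B, hB, -, hj, -⟩ := h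
  exact le_of_mem_parts hB hj

lemma mem_Icc_of_isHead {h : ℕ} (hh : isHead p h) : h ∈ Icc 1 n := by
  obtain ⟨B, hB, hh, -⟩ := hh
  exact p.le hB hh

lemma le_of_isHead {h : ℕ} (hh : isHead p h) : h ≤ n :=
  (mem_Icc.1 (mem_Icc_of_isHead hh)).2

end SetPartition

open SetPartition

/-- `K n p` marks, by one element each, the blocks of `p` that `n + 1` can join without leaving
the class `Φ`; the generating tree of `Φ`, labelled by `#K`, then follows `childLabel`. -/
structure HasSuccessionRule (Φ : ∀ n, SetPartition n → Prop)
    (K : ∀ n, SetPartition n → Finset ℕ) : Prop where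
  holds_zero : ∀ p : SetPartition 0, Φ 0 p
  subset_Icc : ∀ n (p : SetPartition n), K n p ⊆ Icc 1 n
  eq_of_mem_part : ∀ n (p : SetPartition n), ∀ B ∈ p.parts, ∀ m ∈ K n p, ∀ m' ∈ K n p,
    m ∈ B → m' ∈ B → m = m'
  addSingleton_iff : ∀ n (p : SetPartition n), Φ (n + 1) p.addSingleton ↔ Φ n p
  addToPart_iff : ∀ n (p : SetPartition n) B (hB : B ∈ p.parts),
    Φ (n + 1) (p.addToPart hB) ↔ Φ n p ∧ ∃ m ∈ K n p, m ∈ B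
  card_addSingleton : ∀ n (p : SetPartition n), #(K (n + 1) p.addSingleton) = #(K n p) + 1
  card_addToPart : ∀ n (p : SetPartition n) B (hB : B ∈ p.parts), ∀ m ∈ K n p, m ∈ B →
    #(K (n + 1) (p.addToPart hB)) = #{x ∈ K n p | x < m} + if ∀ x ∈ K n p, x ≤ m then 1 else 2

namespace HasSuccessionRule
variable {Φ : ∀ n, SetPartition n → Prop} {K : ∀ n, SetPartition n → Finset ℕ}
  (hK : HasSuccessionRule Φ K) {n : ℕ}
include hK

lemma part_orderEmbOfFin_mem_parts (p : SetPartition n) (i : Fin #(K n p)) :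
    p.part ((K n p).orderEmbOfFin rfl i) ∈ p.parts :=
  p.part_mem.2 (hK.subset_Icc n p (orderEmbOfFin_mem _ _ i))

lemma orderEmbOfFin_mem_part (p : SetPartition n) (i : Fin #(K n p)) :
    (K n p).orderEmbOfFin rfl i ∈ p.part ((K n p).orderEmbOfFin rfl i) :=
  p.mem_part_self.2 (hK.subset_Icc n p (orderEmbOfFin_mem _ _ i))

/-- The `i`-th element of `K n p`, in increasing order, selects the block that `n + 1` joins. -/
noncomputable def child (p : {p : SetPartition n // Φ n p}) :
    Option (Fin #(K n p.1)) → {q : SetPartition (n + 1) // Φ (n + 1) q}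
  | none => ⟨p.1.addSingleton, (hK.addSingleton_iff n p.1).2 p.2⟩
  | some i => ⟨p.1.addToPart (hK.part_orderEmbOfFin_mem_parts p.1 i),
      (hK.addToPart_iff n p.1 _ _).2
        ⟨p.2, _, orderEmbOfFin_mem _ _ i, hK.orderEmbOfFin_mem_part p.1 i⟩⟩

lemma child_bijective :
    Function.Bijective fun x : Σ p : {p : SetPartition n // Φ n p}, Option (Fin #(K n p.1)) =>
      hK.child x.1 x.2 := by
  constructor
  · rintro ⟨p, _ | i⟩ ⟨p', _ | i'⟩ h <;> simp only [child, Subtype.mk.injEq] at h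
    · obtain rfl := Subtype.ext (Finpartition.insertSingleton_injective _ _ h)
      rfl
    · exact absurd h (Finpartition.insertSingleton_ne_insertIntoPart _ _ _ _ _)
    · exact absurd h.symm (Finpartition.insertSingleton_ne_insertIntoPart _ _ _ _ _)
    · obtain ⟨hpp, hB⟩ := Finpartition.insertIntoPart_inj _ _ _ _ h
      obtain rfl := Subtype.ext hpp
      obtain rfl := (orderEmbOfFin _ rfl).injective <| hK.eq_of_mem_part n p.1 _
        (hK.part_orderEmbOfFin_mem_parts p.1 i) _ (orderEmbOfFin_mem _ _ i) _
        (orderEmbOfFin_mem _ _ i') (hK.orderEmbOfFin_mem_part p.1 i)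
        (hB ▸ hK.orderEmbOfFin_mem_part p.1 i')
      rfl
  · rintro ⟨q, hq⟩
    rcases Finpartition.exists_eq_insertSingleton_or_insertIntoPart succ_notMem_Icc
      (insert_Icc_right_eq_Icc_add_one (by omega)) q with ⟨p, rfl⟩ | ⟨p, B, hB, rfl⟩
    · exact ⟨⟨⟨p, (hK.addSingleton_iff n p).1 hq⟩, none⟩, rfl⟩
    · obtain ⟨hp, m, hm, hmB⟩ := (hK.addToPart_iff n p B hB).1 hq
      obtain ⟨i, rfl⟩ : m ∈ Set.range ((K n p).orderEmbOfFin rfl) := by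
        rwa [range_orderEmbOfFin]
      obtain rfl := p.part_eq_of_mem hB hmB
      exact ⟨⟨⟨p, hp⟩, some i⟩, rfl⟩

lemma card_child (p : {p : SetPartition n // Φ n p}) (o : Option (Fin #(K n p.1))) :
    #(K (n + 1) (hK.child p o).1) = childLabel #(K n p.1) o := by
  cases o with
  | none => exact hK.card_addSingleton n p.1
  | some i =>
    have hm := orderEmbOfFin_mem (K n p.1) rfl i
    rw [child, hK.card_addToPart n p.1 _ _ _ hm (hK.orderEmbOfFin_mem_part p.1 i),
      card_filter_lt_orderEmbOfFin]
    simp only [childLabel, forall_le_iff_card_filter_lt_add_one hm, card_filter_lt_orderEmbOfFin]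

theorem card_eq {Ψ : ∀ n, SetPartition n → Prop} {L : ∀ n, SetPartition n → Finset ℕ}
    (hL : HasSuccessionRule Ψ L) (n : ℕ) :
    Nat.card {p : SetPartition n // Φ n p} = Nat.card {p : SetPartition n // Ψ n p} := by
  obtain ⟨e, -⟩ := exists_equiv_label_eq (fun n p => #(K n p.1)) (fun n p => #(L n p.1))
    ((Equiv.subtypeUnivEquiv hK.holds_zero).trans (Equiv.subtypeUnivEquiv hL.holds_zero).symm)
    (fun p => by simp [subset_empty.1 (hK.subset_Icc 0 p.1), subset_empty.1 (hL.subset_Icc 0 _)])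
    (fun _ => Equiv.ofBijective _ hK.child_bijective) (fun _ x => hK.card_child x.1 x.2)
    (fun _ => Equiv.ofBijective _ hL.child_bijective) (fun _ x => hL.card_child x.1 x.2) n
  exact Nat.card_congr e

end HasSuccessionRule

namespace SetPartition
variable {n : ℕ} {p : SetPartition n} {B : Finset ℕ}

def isTail (p : SetPartition n) (m : ℕ) : Prop :=
  ∃ B ∈ p.parts, m ∈ B ∧ ∀ t ∈ B, t ≤ m

lemma isTail_iff_of_mem (hB : B ∈ p.parts) {m : ℕ} (hm : m ∈ B) : isTail p m ↔ ∀ t ∈ B, t ≤ m :=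
  ⟨fun ⟨_, hC, hmC, hle⟩ => p.eq_of_mem_parts hC hB hmC hm ▸ hle, fun hle => ⟨B, hB, hm, hle⟩⟩

lemma isHead_iff_of_mem (hB : B ∈ p.parts) {m : ℕ} (hm : m ∈ B) : isHead p m ↔ ∀ t ∈ B, m ≤ t :=
  ⟨fun ⟨_, hC, hmC, hle⟩ => p.eq_of_mem_parts hC hB hmC hm ▸ hle, fun hle => ⟨B, hB, hm, hle⟩⟩

lemma le_of_isTail {x : ℕ} (hx : isTail p x) : x ≤ n := by
  obtain ⟨B, hB, hx, -⟩ := hx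
  exact le_of_mem_parts hB hx

lemma isTail_addSingleton {x : ℕ} : isTail p.addSingleton x ↔ isTail p x ∨ x = n + 1 := by
  simp only [isTail, addSingleton, Finpartition.parts_insertSingleton, exists_mem_insert,
    mem_singleton]
  grind

lemma isTail_addToPart (hB : B ∈ p.parts) {x : ℕ} :
    isTail (p.addToPart hB) x ↔ x = n + 1 ∨ isTail p x ∧ x ∉ B := by
  have hBn : ∀ x ∈ B, x ≤ n := fun _ => le_of_mem_parts hB
  have hdisj : ∀ C ∈ p.parts, x ∈ C → x ∈ B → C = B := fun C hC hxC => p.eq_of_mem_parts hC hB hxC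
  simp only [isTail, addToPart, Finpartition.parts_insertIntoPart]
  conv_rhs => rw [← insert_erase hB]
  simp only [exists_mem_insert, forall_mem_insert, mem_erase]
  grind

lemma kDistantNoncrossing_addSingleton :
    kDistantNoncrossing 2 p.addSingleton ↔ kDistantNoncrossing 2 p := by
  simp only [kDistantNoncrossing, stdEdge_addSingleton]

lemma kDistantNoncrossing_addToPart (hB : B ∈ p.parts) {m : ℕ} (hm : m ∈ B)
    (hmax : ∀ t ∈ B, t ≤ m) :
    kDistantNoncrossing 2 (p.addToPart hB) ↔
      kDistantNoncrossing 2 p ∧ ¬ ∃ i j, stdEdge p i j ∧ i < m ∧ m + 2 ≤ j := by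
  simp only [kDistantNoncrossing, stdEdge_addToPart, mem_and_forall_le_iff_eq hm hmax]
  constructor
  · intro H
    refine ⟨fun ⟨i1, j1, i2, j2, e1, e2, h⟩ => H ⟨i1, j1, i2, j2, .inl e1, .inl e2, h⟩, ?_⟩
    rintro ⟨i, j, e, hi, hj⟩
    exact H ⟨i, j, m, n + 1, .inl e, .inr ⟨rfl, rfl⟩, hi, by omega,
      by grind [le_of_stdEdge e], by omega⟩
  · rintro ⟨hp, hm⟩ ⟨i1, j1, i2, j2, e1 | ⟨rfl, rfl⟩, e2 | ⟨rfl, rfl⟩, h⟩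
    · exact hp ⟨i1, j1, i2, j2, e1, e2, h⟩
    · exact hm ⟨i1, j1, e1, by omega, by omega⟩
    · grind [le_of_stdEdge e2]
    · omega

/-- Adding `n + 1` to the block closed by `m` creates the standard edge `(m, n + 1)`; `m` is
active when that edge takes part in no 2-distant crossing. -/
noncomputable def activeClosers (p : SetPartition n) : Finset ℕ :=
  open Classical in {m ∈ Icc 1 n | isTail p m ∧ ¬ ∃ i j, stdEdge p i j ∧ i < m ∧ m + 2 ≤ j}

lemma mem_activeClosers {m : ℕ} : m ∈ activeClosers p ↔
    isTail p m ∧ ¬ ∃ i j, stdEdge p i j ∧ i < m ∧ m + 2 ≤ j := by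
  simp only [activeClosers, mem_filter, and_iff_right_iff_imp]
  rintro ⟨⟨B, hB, hm, -⟩, -⟩
  exact p.le hB hm

lemma activeClosers_subset_Icc : activeClosers p ⊆ Icc 1 n := fun x hx => by
  obtain ⟨⟨B, hB, hx, -⟩, -⟩ := mem_activeClosers.1 hx
  exact p.le hB hx

lemma le_of_mem_activeClosers {x : ℕ} (hx : x ∈ activeClosers p) : x ≤ n :=
  (mem_Icc.1 (activeClosers_subset_Icc hx)).2

lemma mem_activeClosers_self (hn : 1 ≤ n) : n ∈ activeClosers p := by
  have hmem : n ∈ Icc 1 n := mem_Icc.2 ⟨hn, le_rfl⟩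
  refine mem_activeClosers.2 ⟨⟨p.part n, p.part_mem.2 hmem, p.mem_part_self.2 hmem,
    fun t ht => (mem_Icc.1 (p.part_subset n ht)).2⟩, fun ⟨i, j, e, _, hj⟩ => ?_⟩
  have := le_of_stdEdge e
  omega

lemma activeClosers_addSingleton :
    activeClosers p.addSingleton = insert (n + 1) (activeClosers p) := by
  ext x
  simp only [mem_insert, mem_activeClosers, isTail_addSingleton, stdEdge_addSingleton]
  constructor
  · grind
  · rintro (rfl | ⟨ht, hcross⟩)
    · exact ⟨.inr rfl, fun ⟨i, j, e, _, hj⟩ => by grind [le_of_stdEdge e]⟩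
    · exact ⟨.inl ht, hcross⟩

lemma activeClosers_addToPart (hB : B ∈ p.parts) {m : ℕ} (hm : m ∈ B) (hmax : ∀ t ∈ B, t ≤ m) :
    activeClosers (p.addToPart hB) =
      insert (n + 1) {x ∈ activeClosers p | x < m ∨ m < x ∧ x = n} := by
  have hcross : ∀ x, (∃ i j, stdEdge (p.addToPart hB) i j ∧ i < x ∧ x + 2 ≤ j) ↔
      (∃ i j, stdEdge p i j ∧ i < x ∧ x + 2 ≤ j) ∨ m < x ∧ x + 2 ≤ n + 1 := fun x => by
    simp only [stdEdge_addToPart, mem_and_forall_le_iff_eq hm hmax, or_and_right, exists_or]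
    simp
  have hold : ¬ ∃ i j, stdEdge p i j ∧ i < n + 1 ∧ n + 1 + 2 ≤ j :=
    fun ⟨i, j, e, _, hj⟩ => by grind [le_of_stdEdge e]
  have htail : ∀ x, isTail p x → x ≤ n ∧ (x ∈ B ↔ x = m) := fun x hx =>
    ⟨le_of_isTail hx, fun hxB => le_antisymm (hmax x hxB) ((isTail_iff_of_mem hB hxB).1 hx m hm),
      fun h => h ▸ hm⟩
  ext x
  simp only [mem_insert, mem_filter, mem_activeClosers, isTail_addToPart, hcross]
  grind

end SetPartition

theorem hasSuccessionRule_activeClosers :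
    HasSuccessionRule (fun _ p => kDistantNoncrossing 2 p) (fun _ p => activeClosers p) where
  holds_zero p := fun ⟨_, j1, _, _, e1, _, _, h, _⟩ => by
    have := le_of_stdEdge e1
    omega
  subset_Icc _ _ := activeClosers_subset_Icc
  eq_of_mem_part n p B hB m hm m' hm' hmB hm'B :=
    le_antisymm ((isTail_iff_of_mem hB hm'B).1 (mem_activeClosers.1 hm').1 m hmB)
      ((isTail_iff_of_mem hB hmB).1 (mem_activeClosers.1 hm).1 m' hm'B)
  addSingleton_iff _ _ := kDistantNoncrossing_addSingleton
  addToPart_iff n p B hB := by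
    have hne := p.nonempty_of_mem_parts hB
    have hmax : ∀ t ∈ B, t ≤ B.max' hne := fun t ht => le_max' B t ht
    rw [kDistantNoncrossing_addToPart hB (max'_mem B hne) hmax]
    refine and_congr_right fun _ => ⟨fun h => ⟨_, mem_activeClosers.2
      ⟨(isTail_iff_of_mem hB (max'_mem B hne)).2 hmax, h⟩, max'_mem B hne⟩, ?_⟩
    rintro ⟨m, hm, hmB⟩
    obtain ⟨ht, hcross⟩ := mem_activeClosers.1 hm
    rwa [← le_antisymm (hmax m hmB) ((isTail_iff_of_mem hB hmB).1 ht _ (max'_mem B hne))]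
  card_addSingleton n p := by
    rw [activeClosers_addSingleton, card_insert_of_notMem fun h => by
      have := le_of_mem_activeClosers h
      omega]
  card_addToPart n p B hB m hm hmB := by
    have hmax := (isTail_iff_of_mem hB hmB).1 (mem_activeClosers.1 hm).1
    have hn : 1 ≤ n := by
      have := mem_Icc.1 (activeClosers_subset_Icc hm)
      omega
    rw [activeClosers_addToPart hB hmB hmax, card_insert_of_notMem fun h => by
      have := le_of_mem_activeClosers (mem_filter.1 h).1
      omega, card_filter_lt_or_eq_max hm (mem_activeClosers_self hn)
      fun x hx => le_of_mem_activeClosers hx]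
    split_ifs <;> rfl

namespace SetPartition
variable {n : ℕ} {p : SetPartition n} {B : Finset ℕ}

lemma kFrontNoncrossing_three_iff : kFrontNoncrossing 3 p ↔
    ¬ ∃ i1 j1 i2 j2, frontEdge p i1 j1 ∧ frontEdge p i2 j2 ∧ i1 < i2 ∧ i2 < j1 ∧ j1 < j2 ∧
      ∃ y, isHead p y ∧ i2 < y ∧ y < j1 := by
  have key (a b : ℕ) :
      3 - 2 ≤ Nat.card {h // isHead p h ∧ a < h ∧ h < b} ↔ ∃ y, isHead p y ∧ a < y ∧ y < b := by
    have : Finite {h // isHead p h ∧ a < h ∧ h < b} :=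
      ((Set.finite_Iio b).subset fun _ hh => hh.2.2).to_subtype
    rw [show 3 - 2 = 1 from rfl, Nat.one_le_iff_ne_zero, Nat.card_ne_zero, nonempty_subtype]
    exact and_iff_left this
  simp only [kFrontNoncrossing, key]

lemma kFrontNoncrossing_addSingleton :
    kFrontNoncrossing 3 p.addSingleton ↔ kFrontNoncrossing 3 p := by
  simp only [kFrontNoncrossing_three_iff, frontEdge_addSingleton, isHead_addSingleton]
  refine not_congr ⟨?_, fun ⟨i1, j1, i2, j2, e1, e2, h1, h2, h3, y, hy, hy'⟩ =>
    ⟨i1, j1, i2, j2, e1, e2, h1, h2, h3, y, .inl hy, hy'⟩⟩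
  rintro ⟨i1, j1, i2, j2, e1, e2, h1, h2, h3, y, hy, hy'⟩
  have := le_of_frontEdge e1
  exact ⟨i1, j1, i2, j2, e1, e2, h1, h2, h3, y, hy.resolve_right (by omega), hy'⟩

lemma kFrontNoncrossing_addToPart (hB : B ∈ p.parts) {h : ℕ} (hh : h ∈ B)
    (hmin : ∀ t ∈ B, h ≤ t) :
    kFrontNoncrossing 3 (p.addToPart hB) ↔ kFrontNoncrossing 3 p ∧
      ¬ ∃ i j, frontEdge p i j ∧ i < h ∧ h < j ∧ ∃ y, isHead p y ∧ h < y ∧ y < j := by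
  simp only [kFrontNoncrossing_three_iff, frontEdge_addToPart, isHead_addToPart,
    mem_and_forall_ge_iff_eq hh hmin]
  constructor
  · intro H
    refine ⟨fun ⟨i1, j1, i2, j2, e1, e2, h⟩ => H ⟨i1, j1, i2, j2, .inl e1, .inl e2, h⟩, ?_⟩
    rintro ⟨i, j, e, hi, hj, hy⟩
    exact H ⟨i, j, h, n + 1, .inl e, .inr ⟨rfl, rfl⟩, hi, hj, by grind [le_of_frontEdge e], hy⟩
  · rintro ⟨hp, hh⟩ ⟨i1, j1, i2, j2, e1 | ⟨rfl, rfl⟩, e2 | ⟨rfl, rfl⟩, h⟩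
    · exact hp ⟨i1, j1, i2, j2, e1, e2, h⟩
    · exact hh ⟨i1, j1, e1, h.1, h.2.1, h.2.2.2⟩
    · grind [le_of_frontEdge e2]
    · omega

/-- Adding `n + 1` to the block opened by `h` creates the front edge `(h, n + 1)`; `h` is active
when that edge takes part in no 3-front crossing. -/
noncomputable def activeOpeners (p : SetPartition n) : Finset ℕ :=
  open Classical in {h ∈ Icc 1 n | isHead p h ∧ ¬ ∃ i j, frontEdge p i j ∧ i < h ∧ h < j ∧
    ∃ y, isHead p y ∧ h < y ∧ y < j}

lemma mem_activeOpeners {h : ℕ} : h ∈ activeOpeners p ↔ isHead p h ∧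
    ¬ ∃ i j, frontEdge p i j ∧ i < h ∧ h < j ∧ ∃ y, isHead p y ∧ h < y ∧ y < j := by
  simp only [activeOpeners, mem_filter, and_iff_right_iff_imp]
  exact fun ⟨hh, _⟩ => mem_Icc_of_isHead hh

lemma activeOpeners_subset_Icc : activeOpeners p ⊆ Icc 1 n :=
  fun _ hx => mem_Icc_of_isHead (mem_activeOpeners.1 hx).1

lemma exists_isHead_top (hn : 1 ≤ n) : ∃ H, isHead p H ∧ ∀ y, isHead p y → y ≤ H := by
  classical
  have h1 : isHead p 1 := by
    have hmem : 1 ∈ Icc 1 n := mem_Icc.2 ⟨le_rfl, hn⟩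
    exact ⟨p.part 1, p.part_mem.2 hmem, p.mem_part_self.2 hmem,
      fun t ht => (mem_Icc.1 (p.part_subset 1 ht)).1⟩
  exact ⟨Nat.findGreatest (isHead p) n, Nat.findGreatest_spec (le_of_isHead h1) h1,
    fun y hy => Nat.le_findGreatest (le_of_isHead hy) hy⟩

lemma mem_activeOpeners_of_top {H : ℕ} (hH : isHead p H) (htop : ∀ y, isHead p y → y ≤ H) :
    H ∈ activeOpeners p :=
  mem_activeOpeners.2 ⟨hH, fun ⟨_, _, _, _, _, y, hy, hHy, _⟩ => (htop y hy).not_gt hHy⟩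

lemma activeOpeners_addSingleton :
    activeOpeners p.addSingleton = insert (n + 1) (activeOpeners p) := by
  ext x
  simp only [mem_insert, mem_activeOpeners, isHead_addSingleton, frontEdge_addSingleton]
  constructor
  · rintro ⟨hx | rfl, hc⟩
    · exact .inr ⟨hx, fun ⟨i, j, e, h1, h2, y, hy, h3⟩ => hc ⟨i, j, e, h1, h2, y, .inl hy, h3⟩⟩
    · exact .inl rfl
  · rintro (rfl | ⟨hx, hc⟩)
    · exact ⟨.inr rfl, fun ⟨i, j, e, _, h2, _⟩ => by grind [le_of_frontEdge e]⟩
    · refine ⟨.inl hx, fun ⟨i, j, e, h1, h2, y, hy, h3, h4⟩ => hc ⟨i, j, e, h1, h2, y, ?_, h3, h4⟩⟩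
      exact hy.resolve_right (by grind [le_of_frontEdge e])

lemma activeOpeners_addToPart (hB : B ∈ p.parts) {h : ℕ} (hh : h ∈ B) (hmin : ∀ t ∈ B, h ≤ t)
    (hhK : h ∈ activeOpeners p) {H : ℕ} (hH : isHead p H) (htop : ∀ y, isHead p y → y ≤ H) :
    activeOpeners (p.addToPart hB) =
      insert h {x ∈ activeOpeners p | x < h ∨ h < x ∧ x = H} := by
  have hcross : ∀ x, (∃ i j, frontEdge (p.addToPart hB) i j ∧ i < x ∧ x < j ∧
      ∃ y, isHead p y ∧ x < y ∧ y < j) ↔ (∃ i j, frontEdge p i j ∧ i < x ∧ x < j ∧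
      ∃ y, isHead p y ∧ x < y ∧ y < j) ∨ h < x ∧ x < n + 1 ∧ ∃ y, isHead p y ∧ x < y ∧ y < n + 1 :=
    fun x => by
      simp only [frontEdge_addToPart, mem_and_forall_ge_iff_eq hh hmin, or_and_right, exists_or]
      simp
  have hbetween : ∀ x, (∃ y, isHead p y ∧ x < y ∧ y < n + 1) ↔ x < H := fun x =>
    ⟨fun ⟨y, hy, hxy, _⟩ => hxy.trans_le (htop y hy),
      fun hxH => ⟨H, hH, hxH, Nat.lt_succ_of_le (le_of_isHead hH)⟩⟩
  have hhK' := mem_activeOpeners.1 hhK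
  have hHn := le_of_isHead hH
  ext x
  simp only [mem_insert, mem_filter, mem_activeOpeners, isHead_addToPart, hcross, hbetween]
  grind

end SetPartition

theorem hasSuccessionRule_activeOpeners :
    HasSuccessionRule (fun _ p => kFrontNoncrossing 3 p) (fun _ p => activeOpeners p) where
  holds_zero p := kFrontNoncrossing_three_iff.2 fun ⟨_, j1, _, _, e1, _, h, _⟩ => by
    have := le_of_frontEdge e1
    omega
  subset_Icc _ _ := activeOpeners_subset_Icc
  eq_of_mem_part n p B hB m hm m' hm' hmB hm'B :=
    le_antisymm ((isHead_iff_of_mem hB hmB).1 (mem_activeOpeners.1 hm).1 m' hm'B)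
      ((isHead_iff_of_mem hB hm'B).1 (mem_activeOpeners.1 hm').1 m hmB)
  addSingleton_iff _ _ := kFrontNoncrossing_addSingleton
  addToPart_iff n p B hB := by
    have hne := p.nonempty_of_mem_parts hB
    have hmin : ∀ t ∈ B, B.min' hne ≤ t := fun t ht => min'_le B t ht
    rw [kFrontNoncrossing_addToPart hB (min'_mem B hne) hmin]
    refine and_congr_right fun _ => ⟨fun h => ⟨_, mem_activeOpeners.2
      ⟨(isHead_iff_of_mem hB (min'_mem B hne)).2 hmin, h⟩, min'_mem B hne⟩, ?_⟩
    rintro ⟨m, hm, hmB⟩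
    obtain ⟨hh, hcross⟩ := mem_activeOpeners.1 hm
    rwa [← le_antisymm ((isHead_iff_of_mem hB hmB).1 hh _ (min'_mem B hne)) (hmin m hmB)]
  card_addSingleton n p := by
    rw [activeOpeners_addSingleton, card_insert_of_notMem fun h => by
      have := (mem_Icc.1 (activeOpeners_subset_Icc h)).2
      omega]
  card_addToPart n p B hB m hm hmB := by
    have hmin := (isHead_iff_of_mem hB hmB).1 (mem_activeOpeners.1 hm).1
    obtain ⟨H, hH, htop⟩ := exists_isHead_top (p := p)
      (by have := mem_Icc.1 (activeOpeners_subset_Icc hm); omega)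
    rw [activeOpeners_addToPart hB hmB hmin hm hH htop, card_insert_of_notMem (by simp),
      card_filter_lt_or_eq_max hm (mem_activeOpeners_of_top hH htop)
        fun x hx => htop x (mem_activeOpeners.1 hx).1]
    split_ifs <;> rfl

/-- The number of `2`-distant noncrossing partitions of `[n]` equals the number of
`12312`-avoiding (= `3`-front noncrossing) partitions of `[n]`. -/
theorem dcount_two_eq_fcount_three (n : ℕ) : dcount 2 n = fcount 3 n :=
  hasSuccessionRule_activeClosers.card_eq hasSuccessionRule_activeOpeners n
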